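/- arXiv:1501.01028 — 3 statements merged into one kernel-verified Lean document; each statement's English description precedes it below -/
import Mathlib

section
/- Let $B$ be a $2\times 2$ complex matrix with top-left entry $b$. Then, as $z\to 0$, $\log\left\|\begin{pmatrix}1&0\\0&0\end{pmatrix}+zB\right\| = \log|1+bz| + O(|z|^2)\|B\|^2$, where $\|\cdot\|$ denotes the operator norm induced by the Euclidean norm on $\mathbb{C}^2$. More precisely, there is an absolute constant $C$ such that for all $z$ with $|z|\,\|B\|\le 1/2$, $\left|\log\left\|\begin{pmatrix}1&0\\0&0\end{pmatrix}+zB\right\| - \log|1+bz|\right| \le C|z|^2\|B\|^2$. -/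
/-!
The operator norm of `A = !![1, 0; 0, 0] + z • B` is squeezed between `‖A 0 0‖ = |1 + bz|` and
the Frobenius norm of `A`. Only the entry `A 0 0` is of order one; the other three entries are
`z * B i j`, of size at most `t = |z| ‖B‖ ≤ 1/2`. Hence `‖A‖² ≤ |A₀₀|² + 3t²`, and
`log ‖A‖ - log |A₀₀| ≤ ½ log (1 + 3t² / |A₀₀|²) ≤ 3t² / (2|A₀₀|²) ≤ 6t²` since `|A₀₀| ≥ 1 - t ≥ 1/2`.
-/

noncomputable def opNorm2 (M : Matrix (Fin 2) (Fin 2) ℂ) : ℝ :=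
  ‖(Matrix.toEuclideanCLM (𝕜 := ℂ) (n := Fin 2)) M‖

open scoped Matrix.Norms.L2Operator

namespace Matrix

variable {𝕜 m n : Type*} [RCLike 𝕜] [Fintype m] [Fintype n] [DecidableEq n]

theorem norm_entry_le_l2_opNorm (A : Matrix m n 𝕜) (i : m) (j : n) : ‖A i j‖ ≤ ‖A‖ := by
  have h := A.l2_opNorm_mulVec (PiLp.single 2 j 1)
  rw [PiLp.norm_single, norm_one, mul_one] at h
  refine le_trans (le_of_eq ?_) ((PiLp.norm_apply_le _ i).trans h)
  simp

omit [DecidableEq n] in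
theorem norm_mulVec_sq_le_sum_sq_mul (A : Matrix m n 𝕜) (x : EuclideanSpace 𝕜 n) :
    ‖(EuclideanSpace.equiv m 𝕜).symm (A *ᵥ x)‖ ^ 2 ≤ (∑ i, ∑ j, ‖A i j‖ ^ 2) * ‖x‖ ^ 2 := by
  rw [EuclideanSpace.norm_sq_eq, EuclideanSpace.norm_sq_eq, Finset.sum_mul]
  refine Finset.sum_le_sum fun i _ => ?_
  calc ‖(A *ᵥ x) i‖ ^ 2 ≤ (∑ j, ‖A i j‖ * ‖x j‖) ^ 2 := by
        gcongr
        exact (norm_sum_le _ _).trans_eq (by simp only [norm_mul])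
    _ ≤ (∑ j, ‖A i j‖ ^ 2) * ∑ j, ‖x j‖ ^ 2 := Finset.sum_mul_sq_le_sq_mul_sq _ _ _

theorem l2_opNorm_sq_le_sum_sq (A : Matrix m n 𝕜) : ‖A‖ ^ 2 ≤ ∑ i, ∑ j, ‖A i j‖ ^ 2 := by
  have hS : 0 ≤ ∑ i, ∑ j, ‖A i j‖ ^ 2 := by positivity
  have h : ‖A‖ ≤ √(∑ i, ∑ j, ‖A i j‖ ^ 2) := by
    refine ContinuousLinearMap.opNorm_le_bound _ (Real.sqrt_nonneg _) fun x => ?_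
    rw [← Real.sqrt_sq (norm_nonneg x), ← Real.sqrt_mul hS]
    exact Real.le_sqrt_of_sq_le (norm_mulVec_sq_le_sum_sq_mul A x)
  exact (pow_le_pow_left₀ (norm_nonneg _) h 2).trans (Real.sq_sqrt hS).le

end Matrix

theorem Real.log_sub_log_le_of_sq_le {a N s : ℝ} (ha : 0 < a) (hN : 0 < N)
    (h : N ^ 2 ≤ a ^ 2 + s) : Real.log N - Real.log a ≤ s / (2 * a ^ 2) :=
  calc Real.log N - Real.log a = Real.log (N ^ 2 / a ^ 2) / 2 := by
        rw [Real.log_div (by positivity) (by positivity), Real.log_pow, Real.log_pow]; ring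
    _ ≤ (N ^ 2 / a ^ 2 - 1) / 2 := by gcongr; exact Real.log_le_sub_one_of_pos (by positivity)
    _ ≤ s / (2 * a ^ 2) := by
        rw [div_sub_one (by positivity), div_div, mul_comm]; gcongr; linarith

theorem stmt0 :
    ∃ C : ℝ, 0 < C ∧
      ∀ (B : Matrix (Fin 2) (Fin 2) ℂ) (z : ℂ),
        ‖z‖ * opNorm2 B ≤ 1 / 2 →
          |Real.log (opNorm2 (!![1, 0; 0, 0] + z • B)) -
              Real.log ‖1 + B 0 0 * z‖| ≤ C * ‖z‖ ^ 2 * opNorm2 B ^ 2 := by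
  refine ⟨6, by norm_num, fun B z hz => ?_⟩
  change ‖z‖ * ‖B‖ ≤ 1 / 2 at hz
  change |Real.log ‖!![1, 0; 0, 0] + z • B‖ - _| ≤ 6 * ‖z‖ ^ 2 * ‖B‖ ^ 2
  set A : Matrix (Fin 2) (Fin 2) ℂ := !![1, 0; 0, 0] + z • B
  set t := ‖z‖ * ‖B‖
  have hzB : ∀ i j, ‖z * B i j‖ ≤ t := fun i j => by
    rw [norm_mul]; exact mul_le_mul_of_nonneg_left (B.norm_entry_le_l2_opNorm i j) (norm_nonneg z)
  have hzB_sq : ∀ i j, ‖z * B i j‖ ^ 2 ≤ t ^ 2 := fun i j =>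
    pow_le_pow_left₀ (norm_nonneg _) (hzB i j) 2
  have hA00 : A 0 0 = 1 + z * B 0 0 := by simp [A]
  have ha : 1 / 2 ≤ ‖A 0 0‖ := by
    have := norm_sub_le_norm_add (1 : ℂ) (z * B 0 0)
    rw [norm_one] at this
    linarith [hzB 0 0, hA00 ▸ this]
  have hA_sq : ‖A‖ ^ 2 ≤ ‖A 0 0‖ ^ 2 + 3 * t ^ 2 := by
    refine A.l2_opNorm_sq_le_sum_sq.trans ?_
    simp only [Fin.sum_univ_two, A, Matrix.add_apply, Matrix.smul_apply, smul_eq_mul]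
    simp only [Matrix.of_apply, Matrix.cons_val', Matrix.cons_val_zero, Matrix.cons_val_one,
      Matrix.empty_val', Matrix.cons_val_fin_one, zero_add]
    linarith [hzB_sq 0 1, hzB_sq 1 0, hzB_sq 1 1]
  have hA_ge : ‖A 0 0‖ ≤ ‖A‖ := A.norm_entry_le_l2_opNorm 0 0
  rw [mul_comm (B 0 0), ← hA00, abs_of_nonneg (sub_nonneg.2 (Real.log_le_log (by linarith) hA_ge))]
  calc Real.log ‖A‖ - Real.log ‖A 0 0‖ ≤ 3 * t ^ 2 / (2 * ‖A 0 0‖ ^ 2) :=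
        Real.log_sub_log_le_of_sq_le (by linarith) (by linarith) hA_sq
    _ ≤ 3 * t ^ 2 / (2 * (1 / 2) ^ 2) := by gcongr
    _ = 6 * ‖z‖ ^ 2 * ‖B‖ ^ 2 := by ring
end

section
/- Let $f$ be analytic and nonvanishing on the disk $\mathcal{D}(z_0,r_0)\subset\mathbb{C}$, and let $M\ge e$ satisfy $\sup_{z\in\mathcal{D}(z_0,r_0)}|f(z)|\le M$ and $|f(z_0)|\ge M^{-1}$. Set $r_1=(1+\log M)^{-2}r_0$. Then there is an absolute constant $C$ such that $|f(z)|\le C|f(z_0)|$ for all $z\in\mathcal{D}(z_0,r_1)$. -/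
/-!
Since `f` has no zeros on the disk, `f = f z₀ * exp g` for a holomorphic `g` with `g z₀ = 0`, and
the two bounds on `f` give `Re g ≤ 2 log M`. The Borel–Carathéodory theorem then bounds `‖g‖` on
the disk of radius `r₀ / (1 + log M)²` by `4 log M / ((1 + log M)² - 1) ≤ 2`, so `‖f‖ ≤ e² ‖f z₀‖`
there.
-/

open Metric

theorem Complex.exists_eq_mul_exp_of_differentiableOn_ball {f : ℂ → ℂ} {c : ℂ} {r : ℝ}
    (hr : 0 < r) (hf : DifferentiableOn ℂ f (ball c r)) (hf₀ : ∀ z ∈ ball c r, f z ≠ 0) :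
    ∃ g : ℂ → ℂ, DifferentiableOn ℂ g (ball c r) ∧ g c = 0 ∧
      ∀ z ∈ ball c r, f z = f c * exp (g z) := by
  have hlogDeriv : DifferentiableOn ℂ (fun z ↦ deriv f z / f z) (ball c r) :=
    (hf.deriv isOpen_ball).div hf hf₀
  obtain ⟨g, hgc, hg⟩ := hlogDeriv.isExactOn_ball.with_val_at c 0
  have hgd : DifferentiableOn ℂ g (ball c r) := fun z hz ↦
    (hg z hz).differentiableAt.differentiableWithinAt
  have hfd : ∀ z ∈ ball c r, HasDerivAt f (deriv f z) z := fun z hz ↦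
    (hf.differentiableAt (isOpen_ball.mem_nhds hz)).hasDerivAt
  have hconst : ∀ z ∈ ball c r, f z * exp (-g z) = f c * exp (-g c) := by
    intro z hz
    refine isOpen_ball.is_const_of_deriv_eq_zero (convex_ball c r).isPreconnected
      (hf.mul (hgd.neg.cexp)) (fun w hw ↦ ?_) hz (mem_ball_self hr)
    rw [((hfd w hw).mul (hg w hw).neg.cexp).deriv, Pi.zero_apply]
    field_simp [hf₀ w hw]
    ring
  refine ⟨g, hgd, hgc, fun z hz ↦ ?_⟩
  have := hconst z hz
  rw [hgc, neg_zero, exp_zero, mul_one, exp_neg] at this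
  field_simp at this
  rw [this, mul_comm]

theorem Complex.borelCaratheodory_ball {g : ℂ → ℂ} {c z : ℂ} {A R : ℝ} (hA : 0 < A)
    (hR : 0 < R) (hg : DifferentiableOn ℂ g (ball c R)) (hgA : ∀ w ∈ ball c R, (g w).re ≤ A)
    (hgc : g c = 0) (hz : z ∈ ball c R) : ‖g z‖ ≤ 2 * A * ‖z - c‖ / (R - ‖z - c‖) := by
  have := borelCaratheodory_zero (f := fun w ↦ g (c + w)) (z := z - c) hA ?_ ?_ hR ?_
    (by simpa using hgc)
  · simpa using this
  · exact hg.comp (by fun_prop) fun w hw ↦ by simpa [mem_ball, dist_eq_norm] using hw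
  · exact fun w hw ↦ hgA _ (by simpa [mem_ball, dist_eq_norm] using hw)
  · simpa [mem_ball, dist_eq_norm] using hz

theorem Real.le_two_mul_log_of_mul_exp_le {a x M : ℝ} (hM : 0 < M) (ha : M⁻¹ ≤ a)
    (h : a * exp x ≤ M) : x ≤ 2 * log M := by
  have hexp : exp x ≤ M ^ 2 := by
    have := mul_le_mul_of_nonneg_right ha (exp_pos x).le
    rw [inv_mul_le_iff₀ hM] at this
    nlinarith
  calc x ≤ log (M ^ 2) := (le_log_iff_exp_le (by positivity)).2 hexp
    _ = 2 * log M := by norm_num [log_pow]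

theorem four_mul_mul_div_sub_le_two {L ρ R : ℝ} (hL : 0 ≤ L) (hρ : 0 ≤ ρ)
    (hρR : ρ < ((1 + L) ^ 2)⁻¹ * R) : 2 * (2 * L) * ρ / (R - ρ) ≤ 2 := by
  rw [inv_mul_eq_div, lt_div_iff₀ (by positivity)] at hρR
  have hLρ := mul_nonneg hρ hL
  have hL2ρ := mul_nonneg hρ (sq_nonneg L)
  rw [div_le_iff₀ (by nlinarith)]
  nlinarith

theorem stmt1 :
    ∃ C : ℝ, 0 < C ∧
      ∀ (f : ℂ → ℂ) (z₀ : ℂ) (r₀ M : ℝ),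
        0 < r₀ → Real.exp 1 ≤ M →
        DifferentiableOn ℂ f (Metric.ball z₀ r₀) →
        (∀ z ∈ Metric.ball z₀ r₀, f z ≠ 0) →
        (∀ z ∈ Metric.ball z₀ r₀, ‖f z‖ ≤ M) →
        M⁻¹ ≤ ‖f z₀‖ →
        ∀ z ∈ Metric.ball z₀ (((1 + Real.log M) ^ 2)⁻¹ * r₀),
          ‖f z‖ ≤ C * ‖f z₀‖ := by
  refine ⟨Real.exp 2, Real.exp_pos 2, ?_⟩
  intro f z₀ r₀ M hr₀ hM hf hf₀ hfM hMf z hz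
  have hM₀ : 0 < M := (Real.exp_pos 1).trans_le hM
  have hlogM : 1 ≤ Real.log M := by rwa [Real.le_log_iff_exp_le hM₀]
  have hzr : z ∈ ball z₀ r₀ := ball_subset_ball
    (mul_le_of_le_one_left hr₀.le (inv_le_one_of_one_le₀ (by nlinarith))) hz
  obtain ⟨g, hg, hgz₀, hfg⟩ := Complex.exists_eq_mul_exp_of_differentiableOn_ball hr₀ hf hf₀
  have hnorm : ∀ w ∈ ball z₀ r₀, ‖f w‖ = ‖f z₀‖ * Real.exp (g w).re := fun w hw ↦ by
    rw [hfg w hw, norm_mul, Complex.norm_exp]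
  have hre : ∀ w ∈ ball z₀ r₀, (g w).re ≤ 2 * Real.log M := fun w hw ↦
    Real.le_two_mul_log_of_mul_exp_le hM₀ hMf (hnorm w hw ▸ hfM w hw)
  have hgz : ‖g z‖ ≤ 2 :=
    (Complex.borelCaratheodory_ball (by positivity) hr₀ hg hre hgz₀ hzr).trans
      (four_mul_mul_div_sub_le_two (by linarith) (norm_nonneg _)
        (by simpa [mem_ball, dist_eq_norm] using hz))
  calc ‖f z‖ = ‖f z₀‖ * Real.exp (g z).re := hnorm z hzr
    _ ≤ ‖f z₀‖ * Real.exp 2 := by gcongr; exact (Complex.re_le_norm _).trans hgz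
    _ = Real.exp 2 * ‖f z₀‖ := mul_comm _ _
end

section
/- Let $\omega\in\mathbb{T}$ be irrational and suppose $\|n\omega\|\ge \frac{c}{n(\log n)^\alpha}$ for all $n\ge 2$ and some $c>0$, $\alpha>1$, where $\|\cdot\|$ denotes the distance to the nearest integer. Let $p>1$, $N>1$, and $\rho>0$ with $\rho\ge 2/N$. Then there is a constant $C_0$ depending only on $c,\alpha,p$ such that $\sum_{k\in S}\|k\omega\|^{-p}\le C_0\,N(\log N)^{\alpha}\rho^{1-p}$, where $S=\{k\in[1,N-1]\cap\mathbb{Z}:\|k\omega\|\ge\rho\}$. -/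
/-- Distance from a real number to the nearest integer. -/
noncomputable def distToInt (x : ℝ) : ℝ := |x - round x|

lemma distToInt_le (x : ℝ) (m : ℤ) : distToInt x ≤ |x - m| := by
  unfold distToInt
  by_cases h : m = round x
  · rw [h]
  · have h1 : |x - round x| ≤ 1 / 2 := abs_sub_round x
    have h2 : (1 : ℝ) ≤ |(m : ℝ) - round x| := by
      have : (1 : ℤ) ≤ |m - round x| := Int.one_le_abs (sub_ne_zero.mpr h)
      calc (1:ℝ) = ((1:ℤ):ℝ) := by norm_num
        _ ≤ ((|m - round x| : ℤ) : ℝ) := by exact_mod_cast this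
        _ = |(m:ℝ) - round x| := by push_cast [Int.cast_abs]; ring_nf
    have h3 : |(m : ℝ) - round x| ≤ |x - m| + |x - round x| := by
      have := abs_sub_abs_le_abs_sub ((m:ℝ) - x) ((round x : ℝ) - x)
      calc |(m : ℝ) - round x| = |((m:ℝ) - x) - ((round x : ℝ) - x)| := by ring_nf
        _ ≤ |(m:ℝ) - x| + |(round x:ℝ) - x| := abs_sub _ _
        _ = |x - m| + |x - round x| := by rw [abs_sub_comm ((m:ℝ)) x, abs_sub_comm ((round x:ℝ)) x]
    linarith

lemma distToInt_nonneg (x : ℝ) : 0 ≤ distToInt x := abs_nonneg _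

lemma distToInt_neg (x : ℝ) : distToInt (-x) = distToInt x := by
  apply le_antisymm
  · calc distToInt (-x) ≤ |(-x) - (-(round x) : ℤ)| := distToInt_le _ _
      _ = |x - round x| := by push_cast; rw [← abs_neg]; ring_nf
  · calc distToInt x ≤ |x - (-(round (-x)) : ℤ)| := distToInt_le _ _
      _ = |(-x) - round (-x)| := by push_cast; rw [← abs_neg]; ring_nf

lemma key_ineq (a b q : ℝ) (ha : 0 < a) (hab : a < b) (hq : 0 < q) :
    q * (b - a) * b ^ (-(q + 1)) ≤ a ^ (-q) - b ^ (-q) := by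
  have hb : 0 < b := ha.trans hab
  set u : ℝ := a / b with hu
  have hu0 : 0 < u := div_pos ha hb
  have hu1 : u < 1 := (div_lt_one hb).mpr hab
  have hX : 0 < 1 + q * (1 - u) := by nlinarith
  have huq : 0 < u ^ q := Real.rpow_pos_of_pos hu0 q
  have hmain : u ^ q * (1 + q * (1 - u)) ≤ 1 := by
    have hlog1 : Real.log u ≤ u - 1 := Real.log_le_sub_one_of_pos hu0
    have hlog2 : Real.log (1 + q * (1 - u)) ≤ q * (1 - u) := by
      have := Real.log_le_sub_one_of_pos hX; linarith
    have hlog : Real.log (u ^ q * (1 + q * (1 - u))) ≤ 0 := by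
      rw [Real.log_mul huq.ne' hX.ne', Real.log_rpow hu0]
      nlinarith
    calc u ^ q * (1 + q * (1 - u)) = Real.exp (Real.log (u ^ q * (1 + q * (1 - u)))) := by
          rw [Real.exp_log (by positivity)]
      _ ≤ Real.exp 0 := Real.exp_le_exp.mpr hlog
      _ = 1 := Real.exp_zero
  have hber : 1 + q * (1 - u) ≤ u ^ (-q) := by
    rw [Real.rpow_neg hu0.le, le_inv_comm₀ hX huq, inv_eq_one_div, le_div_iff₀ hX]
    linarith [hmain]
  have hau : a = u * b := by rw [hu, div_mul_cancel₀ _ hb.ne']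
  have harw : a ^ (-q) = u ^ (-q) * b ^ (-q) := by
    rw [hau, Real.mul_rpow hu0.le hb.le]
  have hbrw : b ^ (-(q+1)) = b ^ (-q) * b⁻¹ := by
    rw [show -(q+1) = -q + (-1) by ring, Real.rpow_add hb, Real.rpow_neg_one]
  rw [harw, hbrw]
  have hbq : 0 < b ^ (-q) := Real.rpow_pos_of_pos hb _
  have h1u : q * (1 - u) = q * (b - a) / b := by
    rw [hu]; field_simp
  calc q * (b - a) * (b ^ (-q) * b⁻¹) = (q * (1 - u)) * b ^ (-q) := by
        rw [h1u]; field_simp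
    _ ≤ (u ^ (-q) - 1) * b ^ (-q) := by nlinarith [hber]
    _ = u ^ (-q) * b ^ (-q) - b ^ (-q) := by ring

lemma tail_sum (ρ δ p : ℝ) (hρ : 0 < ρ) (hδ : 0 < δ) (hp : 1 < p) (M : ℕ) :
    ∑ m ∈ Finset.range M, (ρ + m * δ) ^ (-p) ≤ ρ ^ (-p) + ρ ^ (1 - p) / ((p - 1) * δ) := by
  have hq : 0 < p - 1 := by linarith
  cases M with
  | zero => simp; positivity
  | succ n =>
    rw [Finset.sum_range_succ']
    set F : ℕ → ℝ := fun i => (ρ + i * δ) ^ (-(p - 1)) with hF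
    have hpos : ∀ i : ℕ, (0:ℝ) < ρ + i * δ := fun i => by positivity
    have hterm : ∀ i : ℕ, (ρ + (i + 1 : ℕ) * δ) ^ (-p) ≤ (F i - F (i + 1)) / ((p - 1) * δ) := by
      intro i
      have hab : ρ + (i:ℝ) * δ < ρ + ((i:ℕ) + 1 : ℕ) * δ := by push_cast; nlinarith
      have hk := key_ineq (ρ + (i:ℝ) * δ) (ρ + ((i:ℕ) + 1 : ℕ) * δ) (p - 1) (hpos i) hab hq
      rw [le_div_iff₀ (by positivity)]
      have he : -(p - 1 + 1) = -p := by ring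
      rw [he] at hk
      have hd : (ρ + ((i:ℕ) + 1 : ℕ) * δ) - (ρ + (i:ℝ) * δ) = δ := by push_cast; ring
      rw [hd] at hk
      calc (ρ + ((i:ℕ) + 1 : ℕ) * δ) ^ (-p) * ((p - 1) * δ)
          = (p - 1) * δ * (ρ + ((i:ℕ) + 1 : ℕ) * δ) ^ (-p) := by ring
        _ ≤ (ρ + (i:ℝ) * δ) ^ (-(p-1)) - (ρ + ((i:ℕ) + 1 : ℕ) * δ) ^ (-(p-1)) := hk
        _ = F i - F (i + 1) := by simp only [hF]; all_goals (push_cast; ring_nf)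
    have hsum : ∑ i ∈ Finset.range n, (ρ + ((i:ℕ) + 1 : ℕ) * δ) ^ (-p)
        ≤ ∑ i ∈ Finset.range n, (F i - F (i + 1)) / ((p - 1) * δ) :=
      Finset.sum_le_sum fun i _ => hterm i
    have htel : ∑ i ∈ Finset.range n, (F i - F (i + 1)) / ((p - 1) * δ)
        = (F 0 - F n) / ((p - 1) * δ) := by
      rw [← Finset.sum_div, Finset.sum_range_sub' F n]
    have hF0 : F 0 = ρ ^ (1 - p) := by
      simp only [hF]; rw [neg_sub]; norm_num
    have hFn : 0 ≤ F n := (Real.rpow_pos_of_pos (hpos n) _).le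
    have hlast : (ρ + (0:ℕ) * δ) ^ (-p) = ρ ^ (-p) := by norm_num
    rw [hlast]
    have hdiv : (F 0 - F n) / ((p - 1) * δ) ≤ ρ ^ (1 - p) / ((p - 1) * δ) := by
      rw [div_le_div_iff_of_pos_right (by positivity)]
      linarith
    linarith [hsum, htel ▸ hsum, hdiv]

set_option maxHeartbeats 1000000 in
theorem stmt9 (c α p : ℝ) (hc : 0 < c) (hα : 1 < α) (hp : 1 < p) :
    ∃ C₀ : ℝ, 0 < C₀ ∧
      ∀ (ω : ℝ), Irrational ω →
        (∀ n : ℕ, 2 ≤ n → c / (n * Real.log n ^ α) ≤ distToInt ((n : ℝ) * ω)) →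
        ∀ (N : ℕ) (ρ : ℝ), 1 < N → 2 / N ≤ ρ →
          ∑ k ∈ (Finset.Ico 1 N).filter (fun k : ℕ => ρ ≤ distToInt ((k : ℝ) * ω)),
              distToInt ((k : ℝ) * ω) ^ (-p) ≤
            C₀ * N * Real.log N ^ α * ρ ^ (1 - p) := by
  have hq : 0 < p - 1 := by linarith
  have hα0 : (0:ℝ) ≤ α := by linarith
  have hlog2 : 0 < Real.log 2 := Real.log_pos one_lt_two
  set c₁ : ℝ := min (c / 2 ^ (α + 1)) (c / 2) with hc₁def
  have h2α : (0:ℝ) < 2 ^ (α + 1) := Real.rpow_pos_of_pos two_pos _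
  have hc₁ : 0 < c₁ := lt_min (by positivity) (by positivity)
  have hl2α : (0:ℝ) < Real.log 2 ^ α := Real.rpow_pos_of_pos hlog2 α
  refine ⟨1 / (2 * Real.log 2 ^ α) + 1 / ((p - 1) * c₁), by positivity, ?_⟩
  intro ω _ hdio N ρ hN hρN
  have hN2 : (2:ℝ) ≤ (N:ℝ) := by exact_mod_cast hN
  have hNpos : (0:ℝ) < N := by linarith
  have hlogN : Real.log 2 ≤ Real.log N := Real.log_le_log two_pos hN2
  have hlogNpos : 0 < Real.log N := lt_of_lt_of_le hlog2 hlogN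
  set L : ℝ := Real.log N ^ α with hLdef
  have hLpos : 0 < L := Real.rpow_pos_of_pos hlogNpos α
  have hL2 : Real.log 2 ^ α ≤ L := Real.rpow_le_rpow hlog2.le hlogN hα0
  set δ : ℝ := c₁ / ((N:ℝ) * L) with hδdef
  have hδpos : 0 < δ := by positivity
  have hρpos : 0 < ρ := lt_of_lt_of_le (by positivity) hρN
  -- Step 1: uniform lower bound for distToInt (n ω), 1 ≤ n ≤ 2N
  have hB1 : ∀ n : ℕ, 1 ≤ n → n ≤ 2 * N → δ ≤ distToInt ((n:ℝ) * ω) := by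
    intro n h1n h2n
    rcases eq_or_lt_of_le h1n with h | h
    · -- n = 1
      have hd2 := hdio 2 le_rfl
      have hcast : ((2:ℕ):ℝ) = 2 := by norm_num
      rw [hcast] at hd2
      have hdouble : distToInt (2 * ω) ≤ 2 * distToInt ω := by
        calc distToInt (2*ω) ≤ |2*ω - ((2 * round ω : ℤ):ℝ)| := distToInt_le _ _
          _ = 2 * |ω - round ω| := by
              push_cast
              rw [show (2:ℝ)*ω - 2*(round ω:ℝ) = 2*(ω - (round ω:ℝ)) by ring, abs_mul]
              norm_num
          _ = 2 * distToInt ω := rfl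
      have hω : c / (4 * Real.log 2 ^ α) ≤ distToInt ω := by
        have he : c / (2 * Real.log 2 ^ α) = 2 * (c / (4 * Real.log 2 ^ α)) := by
          field_simp; ring
        linarith
      have hδω : δ ≤ c / (4 * Real.log 2 ^ α) := by
        have h1 : δ ≤ (c/2) / ((N:ℝ) * L) := by
          apply div_le_div₀ (by positivity) (min_le_right _ _) (by positivity) le_rfl
        have h2 : (c/2) / ((N:ℝ) * L) ≤ (c/2) / (2 * Real.log 2 ^ α) := by
          apply div_le_div₀ (by positivity) le_rfl (by positivity)
          nlinarith
        have h3 : (c/2) / (2 * Real.log 2 ^ α) = c / (4 * Real.log 2 ^ α) := by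
          rw [div_div]; ring_nf
        linarith
      have : n = 1 := h.symm
      subst this
      have : ((1:ℕ):ℝ) * ω = ω := by norm_num
      rw [this]
      linarith
    · -- n ≥ 2
      have h2 : 2 ≤ n := h
      have hd := hdio n h2
      have hn2 : (2:ℝ) ≤ (n:ℝ) := by exact_mod_cast h2
      have hn2N : (n:ℝ) ≤ 2 * N := by exact_mod_cast h2n
      have hlogn0 : 0 < Real.log n := Real.log_pos (by linarith)
      have h1' : Real.log n ≤ 2 * Real.log N := by
        have ha : Real.log n ≤ Real.log (2 * N) := Real.log_le_log (by linarith) hn2N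
        have hb : Real.log (2 * (N:ℝ)) = Real.log 2 + Real.log N :=
          Real.log_mul two_ne_zero (by positivity)
        linarith
      have h2' : Real.log n ^ α ≤ 2 ^ α * L := by
        calc Real.log n ^ α ≤ (2 * Real.log N) ^ α :=
              Real.rpow_le_rpow hlogn0.le h1' hα0
          _ = 2 ^ α * L := by rw [Real.mul_rpow (by norm_num) hlogNpos.le]
      have h3' : (n:ℝ) * Real.log n ^ α ≤ 2 ^ (α+1) * ((N:ℝ) * L) := by
        have he : (2:ℝ) ^ (α+1) = 2 * 2 ^ α := by
          rw [Real.rpow_add two_pos, Real.rpow_one]; ring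
        calc (n:ℝ) * Real.log n ^ α ≤ (2 * N) * (2 ^ α * L) :=
              mul_le_mul hn2N h2' (by positivity) (by positivity)
          _ = 2 ^ (α+1) * ((N:ℝ) * L) := by rw [he]; ring
      have h4' : δ ≤ c / ((n:ℝ) * Real.log n ^ α) := by
        have ha : δ ≤ (c / 2 ^ (α+1)) / ((N:ℝ) * L) :=
          div_le_div₀ (by positivity) (min_le_left _ _) (by positivity) le_rfl
        have hb : (c / 2 ^ (α+1)) / ((N:ℝ) * L) = c / (2 ^ (α+1) * ((N:ℝ) * L)) := by
          rw [div_div]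
        have hcc : c / (2 ^ (α+1) * ((N:ℝ) * L)) ≤ c / ((n:ℝ) * Real.log n ^ α) :=
          div_le_div₀ hc.le le_rfl (by positivity) h3'
        linarith
      linarith
  -- Step 2: separation of the points
  set x : ℕ → ℝ := fun k => distToInt ((k:ℝ) * ω) with hxdef
  have hsep : ∀ j k : ℕ, 1 ≤ j → j < k → k < N → δ ≤ |x j - x k| := by
    intro j k h1j hjk hkN
    set a : ℝ := (j:ℝ)*ω - round ((j:ℝ)*ω) with ha
    set b : ℝ := (k:ℝ)*ω - round ((k:ℝ)*ω) with hb
    have hxj : x j = |a| := rfl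
    have hxk : x k = |b| := rfl
    have hsub : δ ≤ |b - a| := by
      have h1 : 1 ≤ k - j := by omega
      have h2 : k - j ≤ 2 * N := by omega
      calc δ ≤ distToInt ((↑(k-j):ℝ) * ω) := hB1 (k-j) h1 h2
        _ ≤ |(↑(k-j):ℝ)*ω - ((round ((k:ℝ)*ω) - round ((j:ℝ)*ω) : ℤ):ℝ)| := distToInt_le _ _
        _ = |b - a| := by
            congr 1
            rw [hb, ha, Nat.cast_sub hjk.le]
            push_cast
            ring
    have hadd : δ ≤ |b + a| := by
      have h1 : 1 ≤ k + j := by omega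
      have h2 : k + j ≤ 2 * N := by omega
      calc δ ≤ distToInt ((↑(k+j):ℝ) * ω) := hB1 (k+j) h1 h2
        _ ≤ |(↑(k+j):ℝ)*ω - ((round ((k:ℝ)*ω) + round ((j:ℝ)*ω) : ℤ):ℝ)| := distToInt_le _ _
        _ = |b + a| := by
            congr 1
            rw [hb, ha]
            push_cast
            ring
    rw [hxj, hxk]
    rcases abs_cases a with ⟨ha1, _⟩ | ⟨ha1, _⟩ <;> rcases abs_cases b with ⟨hb1, _⟩ | ⟨hb1, _⟩
    · rw [ha1, hb1, abs_sub_comm]; exact hsub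
    · rw [ha1, hb1, show a - -b = b + a by ring]; exact hadd
    · rw [ha1, hb1, show -a - b = -(b + a) by ring, abs_neg]; exact hadd
    · rw [ha1, hb1, show -a - -b = b - a by ring]; exact hsub
  -- Step 3: binning
  set S := (Finset.Ico 1 N).filter (fun k : ℕ => ρ ≤ distToInt ((k : ℝ) * ω)) with hSdef
  set ind : ℕ → ℕ := fun k => ⌊(x k - ρ) / δ⌋₊ with hinddef
  have hxρ : ∀ k ∈ S, ρ ≤ x k := by
    intro k hk
    exact (Finset.mem_filter.mp hk).2
  have hmemIco : ∀ k ∈ S, 1 ≤ k ∧ k < N := by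
    intro k hk
    exact Finset.mem_Ico.mp (Finset.mem_filter.mp hk).1
  have hfl : ∀ k ∈ S, (ind k : ℝ) ≤ (x k - ρ)/δ ∧ (x k - ρ)/δ < ind k + 1 := by
    intro k hk
    exact ⟨Nat.floor_le (div_nonneg (by linarith [hxρ k hk]) hδpos.le), Nat.lt_floor_add_one _⟩
  have hlow : ∀ k ∈ S, ρ + ind k * δ ≤ x k := by
    intro k hk
    have h1 := (hfl k hk).1
    have := (le_div_iff₀ hδpos).mp h1
    linarith
  have hinj : ∀ k₁ ∈ S, ∀ k₂ ∈ S, ind k₁ = ind k₂ → k₁ = k₂ := by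
    intro k₁ hk₁ k₂ hk₂ he
    by_contra hne
    have hd : δ ≤ |x k₁ - x k₂| := by
      rcases lt_or_gt_of_ne hne with hlt | hgt
      · exact hsep k₁ k₂ (hmemIco k₁ hk₁).1 hlt (hmemIco k₂ hk₂).2
      · rw [abs_sub_comm]
        exact hsep k₂ k₁ (hmemIco k₂ hk₂).1 hgt (hmemIco k₁ hk₁).2
    have h1 := hfl k₁ hk₁
    have h2 := hfl k₂ hk₂
    rw [he] at h1
    have e1 : (ind k₂ : ℝ) * δ ≤ x k₁ - ρ := (le_div_iff₀ hδpos).mp h1.1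
    have e2 : x k₁ - ρ < ((ind k₂ : ℝ) + 1) * δ := (div_lt_iff₀ hδpos).mp h1.2
    have e3 : (ind k₂ : ℝ) * δ ≤ x k₂ - ρ := (le_div_iff₀ hδpos).mp h2.1
    have e4 : x k₂ - ρ < ((ind k₂ : ℝ) + 1) * δ := (div_lt_iff₀ hδpos).mp h2.2
    have : |x k₁ - x k₂| < δ := by
      rw [abs_lt]
      constructor <;> nlinarith
    linarith
  -- Step 4: sum estimates
  set M : ℕ := (S.image ind).sup id + 1 with hMdef
  have hchain : ∑ k ∈ S, x k ^ (-p) ≤ ρ ^ (-p) + ρ ^ (1 - p) / ((p - 1) * δ) := by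
    have hstep1 : ∑ k ∈ S, x k ^ (-p) ≤ ∑ k ∈ S, (ρ + ind k * δ) ^ (-p) := by
      apply Finset.sum_le_sum
      intro k hk
      have hpos : (0:ℝ) < ρ + ind k * δ :=
        add_pos_of_pos_of_nonneg hρpos (mul_nonneg (Nat.cast_nonneg _) hδpos.le)
      exact Real.rpow_le_rpow_of_nonpos hpos (hlow k hk) (by linarith)
    have hstep2 : ∑ m ∈ S.image ind, (ρ + (m:ℝ) * δ) ^ (-p) = ∑ k ∈ S, (ρ + (ind k : ℝ) * δ) ^ (-p) :=
      Finset.sum_image (g := ind) (f := fun m : ℕ => (ρ + (m:ℝ) * δ) ^ (-p))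
        (fun k₁ hk₁ k₂ hk₂ h => hinj k₁ hk₁ k₂ hk₂ h)
    have hstep3 : ∑ m ∈ S.image ind, (ρ + m * δ) ^ (-p) ≤
        ∑ m ∈ Finset.range M, (ρ + m * δ) ^ (-p) := by
      apply Finset.sum_le_sum_of_subset_of_nonneg
      · intro m hm
        exact Finset.mem_range.mpr (Nat.lt_succ_of_le (Finset.le_sup (f := id) hm))
      · intro m _ _
        positivity
    have hstep4 := tail_sum ρ δ p hρpos hδpos hp M
    linarith
  -- Step 5: final numeric bound
  have hρ1p : (0:ℝ) < ρ ^ (1-p) := Real.rpow_pos_of_pos hρpos _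
  have hρp : ρ ^ (-p) = ρ⁻¹ * ρ ^ (1-p) := by
    rw [show -p = -1 + (1-p) by ring, Real.rpow_add hρpos, Real.rpow_neg_one]
  have hρinv : ρ⁻¹ ≤ (N:ℝ) / 2 := by
    have h2N : (0:ℝ) < 2 / N := by positivity
    calc ρ⁻¹ ≤ (2/(N:ℝ))⁻¹ := inv_anti₀ h2N hρN
      _ = (N:ℝ)/2 := by rw [inv_div]
  have hterm1 : ρ ^ (-p) ≤ 1/(2 * Real.log 2 ^ α) * ((N:ℝ) * L) * ρ ^ (1-p) := by
    have h1 : ρ ^ (-p) ≤ ((N:ℝ)/2) * ρ ^ (1-p) := by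
      rw [hρp]
      exact mul_le_mul_of_nonneg_right hρinv hρ1p.le
    have h2 : (N:ℝ)/2 ≤ 1/(2 * Real.log 2 ^ α) * ((N:ℝ) * L) := by
      have heq : 1/(2 * Real.log 2 ^ α) * ((N:ℝ) * L) = (N:ℝ) * (L / Real.log 2 ^ α) / 2 := by
        field_simp
      rw [heq]
      have h1L : (1:ℝ) ≤ L / Real.log 2 ^ α := (one_le_div hl2α).mpr hL2
      have : (N:ℝ) * 1 ≤ (N:ℝ) * (L / Real.log 2 ^ α) :=
        mul_le_mul_of_nonneg_left h1L hNpos.le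
      linarith
    nlinarith
  have hterm2 : ρ ^ (1-p) / ((p-1) * δ) = 1/((p-1) * c₁) * ((N:ℝ) * L) * ρ ^ (1-p) := by
    rw [hδdef]
    field_simp
  calc ∑ k ∈ S, x k ^ (-p) ≤ ρ ^ (-p) + ρ ^ (1 - p) / ((p - 1) * δ) := hchain
    _ ≤ 1/(2 * Real.log 2 ^ α) * ((N:ℝ) * L) * ρ ^ (1-p)
        + 1/((p-1) * c₁) * ((N:ℝ) * L) * ρ ^ (1-p) := by
        rw [hterm2] at *
        linarith
    _ = (1 / (2 * Real.log 2 ^ α) + 1 / ((p - 1) * c₁)) * ↑N * L * ρ ^ (1 - p) := by ring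
end
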